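/- Let f : ℝⁿ × ℝˡ → ℝ and c : ℝⁿ × ℝˡ → ℝᵐ be twice continuously differentiable, and suppose (x*, λ*, ν*) ∈ ℝⁿ × ℝᵐ × ℝⁿ satisfies, at parameter p₀ ∈ ℝˡ, the KKT system: ∇ₓf(x*;p₀) + (∇ₓc(x*;p₀))ᵀλ* − ν* = 0, c(x*;p₀) = 0, x* ≥ 0, ν* ≥ 0, and x*ᵢν*ᵢ = 0 for all i. Assume strict complementarity (x*ᵢ + ν*ᵢ > 0 for all i), LICQ (the rows of ∇ₓc(x*;p₀) together with the unit vectors {eᵢ : x*ᵢ = 0} are linearly independent), and the reduced second-order condition (hᵀ∇²ₓₓL(x*,λ*,ν*;p₀)h > 0 for all nonzero h with ∇ₓc(x*;p₀)h = 0 and hᵢ = 0 whenever x*ᵢ = 0). Then there exist an open neighborhood U of p₀ and continuously differentiable maps x : U → ℝⁿ, λ : U → ℝᵐ, ν : U → ℝⁿ with (x(p₀), λ(p₀), ν(p₀)) = (x*, λ*, ν*) such that for every p ∈ U: ∇ₓf(x(p);p) + (∇ₓc(x(p);p))ᵀλ(p) − ν(p) = 0, c(x(p);p) = 0, x(p) ≥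 0, ν(p) ≥ 0, and xᵢ(p)νᵢ(p) = 0 for all i. -/

import Mathlib

/-! Dropping the sign constraints, the KKT conditions form a square system
`K(p; x, λ, ν) = (∇ₓL, c(x; p), x ∘ ν) = 0`. Its Jacobian in `(x, λ, ν)` at the base point is
injective: for a kernel vector `(h, u, w)`, complementarity forces `hᵢ = 0` on the active set and
`wᵢ = 0` off it, so `h ⬝ ∇²L h = 0` and the reduced second-order condition gives `h = 0`; then
`Aᵀu = w` with `w` supported on the active set, and LICQ gives `u = w = 0`. The implicit function
theorem yields a `C¹` solution branch; strict complementarity persists near `p₀` by continuity,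
and together with `x ∘ ν = 0` it keeps `x` and `ν` nonnegative. -/

open Matrix

/-- The Jacobian matrix of a map `f : ℝⁿ → ℝᵐ` at a point `x`, with entry `(i, j)`
given by `∂fᵢ/∂xⱼ`. -/
noncomputable def jacobian {n m : ℕ} (f : (Fin n → ℝ) → (Fin m → ℝ)) (x : Fin n → ℝ) :
    Matrix (Fin m) (Fin n) ℝ :=
  Matrix.of fun i j => fderiv ℝ f x (Pi.single j 1) i

/-- The gradient of a scalar function `φ : ℝⁿ → ℝ` at a point `x`. -/
noncomputable def grad {n : ℕ} (φ : (Fin n → ℝ) → ℝ) (x : Fin n → ℝ) : Fin n → ℝ :=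
  fun j => fderiv ℝ φ x (Pi.single j 1)

/-- The Hessian matrix of a scalar function `φ : ℝⁿ → ℝ` at a point `x`. -/
noncomputable def hessian {n : ℕ} (φ : (Fin n → ℝ) → ℝ) (x : Fin n → ℝ) :
    Matrix (Fin n) (Fin n) ℝ :=
  Matrix.of fun i j => fderiv ℝ (fun z => fderiv ℝ φ z (Pi.single j 1)) x (Pi.single i 1)

section LinearAlgebra

variable {ι κ : Type*} [Fintype ι] [Fintype κ] [DecidableEq ι]

theorem eq_zero_of_transpose_mulVec_eq_of_linearIndependent {A : Matrix κ ι ℝ}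
    {active : ι → Prop}
    (hLI : LinearIndependent ℝ
      (Sum.elim (fun k => A k) (fun i : {i // active i} => (Pi.single (i : ι) 1 : ι → ℝ))))
    {u : κ → ℝ} {w : ι → ℝ} (hw : ∀ i, ¬ active i → w i = 0) (huw : Aᵀ *ᵥ u = w) :
    u = 0 ∧ w = 0 := by
  classical
  have hw_eq : ∑ i : {i // active i}, w i • (Pi.single (i : ι) 1 : ι → ℝ) = w := by
    ext j
    by_cases hj : active j
    · rw [Finset.sum_apply, Finset.sum_eq_single ⟨j, hj⟩]
      · simp
      · intro i _ hi
        simp [Ne.symm (Subtype.coe_ne_coe.mpr hi)]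
      · simp
    · simp [Finset.sum_apply, hw j hj,
        show ∀ i : {i // active i}, j ≠ i from fun i h => hj (h ▸ i.2)]
  have hsum : ∑ s, Sum.elim u (fun i : {i // active i} => -w i) s •
      Sum.elim (fun k => A k) (fun i : {i // active i} => (Pi.single (i : ι) 1 : ι → ℝ)) s
      = 0 := by
    rw [Fintype.sum_sum_type]
    simp only [Sum.elim_inl, Sum.elim_inr, neg_smul, Finset.sum_neg_distrib, hw_eq]
    rw [← vecMul_eq_sum, ← mulVec_transpose, huw, add_neg_cancel]
  have hzero := Fintype.linearIndependent_iff.mp hLI _ hsum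
  refine ⟨funext fun k => hzero (.inl k), funext fun i => ?_⟩
  by_cases hi : active i
  · simpa using hzero (.inr ⟨i, hi⟩)
  · exact hw i hi

theorem kkt_linearization_eq_zero {H : Matrix ι ι ℝ} {A : Matrix κ ι ℝ} {x ν : ι → ℝ}
    (hcomp : ∀ i, x i * ν i = 0) (hstrict : ∀ i, 0 < x i + ν i)
    (hLICQ : LinearIndependent ℝ
      (Sum.elim (fun k => A k) (fun i : {i // x i = 0} => (Pi.single (i : ι) 1 : ι → ℝ))))
    (hSOSC : ∀ h : ι → ℝ, h ≠ 0 → A *ᵥ h = 0 → (∀ i, x i = 0 → h i = 0) →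
      0 < h ⬝ᵥ H *ᵥ h)
    {h w : ι → ℝ} {u : κ → ℝ} (hstat : h ᵥ* H + Aᵀ *ᵥ u - w = 0) (hlin : A *ᵥ h = 0)
    (hcompl : x * w + ν * h = 0) :
    h = 0 ∧ u = 0 ∧ w = 0 := by
  have hh_active : ∀ i, x i = 0 → h i = 0 := fun i hi => by
    have hν : ν i ≠ 0 := by linarith [hstrict i]
    simpa [hi, hν] using congrFun hcompl i
  have hw_inactive : ∀ i, x i ≠ 0 → w i = 0 := fun i hi => by
    have hν : ν i = 0 := (mul_eq_zero.mp (hcomp i)).resolve_left hi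
    simpa [hi, hν] using congrFun hcompl i
  have hhw : h ⬝ᵥ w = 0 := Finset.sum_eq_zero fun i _ => by
    by_cases hi : x i = 0
    · simp [hh_active i hi]
    · simp [hw_inactive i hi]
  have hcurv : h ⬝ᵥ H *ᵥ h = 0 := by
    have := congrArg (h ⬝ᵥ ·) hstat
    simp only [dotProduct_sub, dotProduct_add, dotProduct_zero, hhw, sub_zero] at this
    rwa [mulVec_transpose, dotProduct_comm h (u ᵥ* A), ← dotProduct_mulVec, hlin,
      dotProduct_zero, add_zero, dotProduct_comm, ← dotProduct_mulVec] at this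
  have hh : h = 0 := by
    by_contra hne
    exact (hSOSC h hne hlin hh_active).ne' hcurv
  obtain ⟨hu, hw⟩ := eq_zero_of_transpose_mulVec_eq_of_linearIndependent hLICQ
    hw_inactive (by simpa [hh, sub_eq_zero] using hstat)
  exact ⟨hh, hu, hw⟩

end LinearAlgebra

theorem ContinuousLinearMap.isInvertible_of_injective {V : Type*} [NormedAddCommGroup V]
    [NormedSpace ℝ V] [FiniteDimensional ℝ V] {f : V →L[ℝ] V} (hf : Function.Injective f) :
    f.IsInvertible :=
  ⟨(LinearEquiv.ofInjectiveEndo (f : V →ₗ[ℝ] V) hf).toContinuousLinearEquiv, rfl⟩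

section Calculus

variable {n m : ℕ}

theorem jacobian_mulVec (φ : (Fin n → ℝ) → Fin m → ℝ) (x v : Fin n → ℝ) :
    jacobian φ x *ᵥ v = fderiv ℝ φ x v := by
  have : jacobian φ x = LinearMap.toMatrix' (fderiv ℝ φ x : (Fin n → ℝ) →ₗ[ℝ] Fin m → ℝ) := by
    ext k j
    simp [jacobian, LinearMap.toMatrix'_apply]
  rw [this, LinearMap.toMatrix'_mulVec]
  rfl

theorem jacobian_row {φ : (Fin n → ℝ) → Fin m → ℝ} {x : Fin n → ℝ}
    (hφ : DifferentiableAt ℝ φ x) (k : Fin m) :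
    jacobian φ x k = grad (fun y => φ y k) x := by
  ext j
  simp [jacobian, grad, fderiv_apply hφ k]

theorem transpose_jacobian_mulVec {φ : (Fin n → ℝ) → Fin m → ℝ} {x : Fin n → ℝ}
    (hφ : DifferentiableAt ℝ φ x) (lam : Fin m → ℝ) :
    (jacobian φ x)ᵀ *ᵥ lam = ∑ k, lam k • grad (fun y => φ y k) x := by
  simp only [mulVec_transpose, vecMul_eq_sum, jacobian_row hφ]

theorem fderiv_grad_apply {φ : (Fin n → ℝ) → ℝ} {x : Fin n → ℝ}
    (hφ : DifferentiableAt ℝ (grad φ) x) (v : Fin n → ℝ) :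
    fderiv ℝ (grad φ) x v = v ᵥ* hessian φ x := by
  have : hessian φ x = (jacobian (grad φ) x)ᵀ := by
    ext i j
    rw [transpose_apply, jacobian_row hφ]
    rfl
  rw [this, vecMul_transpose, jacobian_mulVec]

theorem contDiff_grad {φ : (Fin n → ℝ) → ℝ} (hφ : ContDiff ℝ 2 φ) :
    ContDiff ℝ 1 (grad φ) :=
  contDiff_pi.2 fun _ => (hφ.fderiv_right le_rfl).clm_apply contDiff_const

noncomputable def lagrangian (g : (Fin n → ℝ) → ℝ) (c : (Fin n → ℝ) → Fin m → ℝ)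
    (lam : Fin m → ℝ) (nu : Fin n → ℝ) (z : Fin n → ℝ) : ℝ :=
  g z + ∑ k, lam k * c z k - ∑ i, nu i * z i

theorem contDiff_lagrangian {g : (Fin n → ℝ) → ℝ} {c : (Fin n → ℝ) → Fin m → ℝ}
    (hg : ContDiff ℝ 2 g) (hc : ContDiff ℝ 2 c) (lam : Fin m → ℝ) (nu : Fin n → ℝ) :
    ContDiff ℝ 2 (lagrangian g c lam nu) := by
  unfold lagrangian
  fun_prop

theorem grad_lagrangian {g : (Fin n → ℝ) → ℝ} {c : (Fin n → ℝ) → Fin m → ℝ}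
    {x : Fin n → ℝ} (hg : DifferentiableAt ℝ g x) (hc : DifferentiableAt ℝ c x)
    (lam : Fin m → ℝ) (nu : Fin n → ℝ) :
    grad (lagrangian g c lam nu) x = grad g x + (jacobian c x)ᵀ *ᵥ lam - nu := by
  have hck : ∀ k, DifferentiableAt ℝ (fun y => c y k) x := fun k =>
    differentiableAt_pi.1 hc k
  have hL : HasFDerivAt (lagrangian g c lam nu) (fderiv ℝ g x
      + ∑ k, lam k • fderiv ℝ (fun y => c y k) x - ∑ i, nu i • ContinuousLinearMap.proj i) x :=
    (hg.hasFDerivAt.add (HasFDerivAt.fun_sum fun k _ => (hck k).hasFDerivAt.const_mul (lam k))).sub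
      (HasFDerivAt.fun_sum fun i _ => (hasFDerivAt_apply i x).const_mul (nu i))
  ext j
  simp [grad, hL.fderiv, transpose_jacobian_mulVec hc, Pi.single_apply]

abbrev PrimalDual (n m : ℕ) : Type := (Fin n → ℝ) × (Fin m → ℝ) × (Fin n → ℝ)

noncomputable def kktResidual (g : (Fin n → ℝ) → ℝ) (c : (Fin n → ℝ) → Fin m → ℝ)
    (z : PrimalDual n m) : PrimalDual n m :=
  (grad g z.1 + (jacobian c z.1)ᵀ *ᵥ z.2.1 - z.2.2, c z.1, z.1 * z.2.2)

theorem fderiv_kktResidual_apply {g : (Fin n → ℝ) → ℝ} {c : (Fin n → ℝ) → Fin m → ℝ}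
    (hg : ContDiff ℝ 2 g) (hc : ContDiff ℝ 2 c) (x : Fin n → ℝ) (lam : Fin m → ℝ)
    (nu h : Fin n → ℝ) (u : Fin m → ℝ) (w : Fin n → ℝ) :
    fderiv ℝ (kktResidual g c) (x, lam, nu) (h, u, w) =
      (h ᵥ* hessian (lagrangian g c lam nu) x + (jacobian c x)ᵀ *ᵥ u - w,
        jacobian c x *ᵥ h, x * w + nu * h) := by
  have hg1 := hg.differentiable two_ne_zero
  have hc1 := hc.differentiable two_ne_zero
  have hgradL : DifferentiableAt ℝ (grad (lagrangian g c lam nu)) x :=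
    (contDiff_grad (contDiff_lagrangian hg hc lam nu)).differentiable one_ne_zero x
  have hgradc : ∀ k, DifferentiableAt ℝ (grad fun y => c y k) x := fun k =>
    (contDiff_grad (contDiff_pi.1 hc k)).differentiable one_ne_zero x
  -- Recentred at `(lam, nu)`, so that the product rule leaves only `(jacobian c x)ᵀ *ᵥ u`
  -- from the multiplier term.
  have hrepr : kktResidual g c = fun z =>
      (grad (lagrangian g c lam nu) z.1
          + ∑ k, (z.2.1 k - lam k) • grad (fun y => c y k) z.1 - (z.2.2 - nu),
        c z.1, z.1 * z.2.2) := by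
    funext z
    simp only [kktResidual, grad_lagrangian (hg1 _) (hc1 _), transpose_jacobian_mulVec (hc1 _),
      sub_smul, Finset.sum_sub_distrib]
    congr 1
    abel
  set z₀ : PrimalDual n m := (x, lam, nu)
  have hx : HasFDerivAt (fun z : PrimalDual n m => z.1) _ z₀ :=
    hasFDerivAt_fst (𝕜 := ℝ)
  have hlam : HasFDerivAt (fun z : PrimalDual n m => z.2.1) _ z₀ :=
    (hasFDerivAt_snd (𝕜 := ℝ)).fst
  have hnu : HasFDerivAt (fun z : PrimalDual n m => z.2.2) _ z₀ :=
    (hasFDerivAt_snd (𝕜 := ℝ)).snd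
  have hD := (((hgradL.hasFDerivAt.comp z₀ hx).add
      (HasFDerivAt.fun_sum (u := Finset.univ) fun k _ =>
        ((hasFDerivAt_pi'.1 hlam k).sub_const (lam k)).smul
          ((hgradc k).hasFDerivAt.comp z₀ hx))).sub (hnu.sub_const nu)).prodMk
    (((hc1 x).hasFDerivAt.comp z₀ hx).prodMk (hx.mul hnu))
  rw [hrepr]
  refine (congrArg (· (h, u, w)) hD.fderiv).trans ?_
  simp [z₀, fderiv_grad_apply hgradL, jacobian_mulVec, transpose_jacobian_mulVec (hc1 x)]

theorem contDiff_kktResidual_uncurry {X : Type*} [NormedAddCommGroup X] [NormedSpace ℝ X]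
    {g : X → (Fin n → ℝ) → ℝ} {c : X → (Fin n → ℝ) → Fin m → ℝ}
    (hg : ContDiff ℝ 2 (Function.uncurry g)) (hc : ContDiff ℝ 2 (Function.uncurry c)) :
    ContDiff ℝ 1 fun q : X × PrimalDual n m =>
      kktResidual (g q.1) (c q.1) q.2 := by
  have hx : ContDiff ℝ 1 fun q : X × PrimalDual n m => q.2.1 := by
    fun_prop
  have hfst : ContDiff ℝ 2 fun w : (X × PrimalDual n m) × (Fin n → ℝ) =>
      (w.1.1, w.2) := by
    fun_prop
  have hDg := ContDiff.fderiv (f := fun q : X × PrimalDual n m => g q.1)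
    (hg.comp hfst) hx le_rfl
  have hDc := ContDiff.fderiv (f := fun q : X × PrimalDual n m => c q.1)
    (hc.comp hfst) hx le_rfl
  refine ContDiff.prodMk (contDiff_pi.2 fun j => ?_)
    (ContDiff.prodMk ((hc.of_le one_le_two).comp (contDiff_fst.prodMk hx)) (by fun_prop))
  simp only [Pi.add_apply, Pi.sub_apply, grad, mulVec, dotProduct, transpose_apply, jacobian,
    of_apply]
  exact ((hDg.clm_apply contDiff_const).add (ContDiff.sum fun k _ =>
    (contDiff_pi.1 (hDc.clm_apply contDiff_const) k).mul (by fun_prop))).sub (by fun_prop)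

theorem kktResidual_eq_zero_iff {g : (Fin n → ℝ) → ℝ} {c : (Fin n → ℝ) → Fin m → ℝ}
    {x : Fin n → ℝ} {lam : Fin m → ℝ} {nu : Fin n → ℝ} :
    kktResidual g c (x, lam, nu) = 0 ↔
      grad g x + (jacobian c x)ᵀ *ᵥ lam - nu = 0 ∧ c x = 0 ∧ ∀ i, x i * nu i = 0 := by
  simp [kktResidual, funext_iff]

theorem injective_fderiv_kktResidual {g : (Fin n → ℝ) → ℝ} {c : (Fin n → ℝ) → Fin m → ℝ}
    (hg : ContDiff ℝ 2 g) (hc : ContDiff ℝ 2 c) {x : Fin n → ℝ} {lam : Fin m → ℝ}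
    {nu : Fin n → ℝ} (hcomp : ∀ i, x i * nu i = 0) (hstrict : ∀ i, 0 < x i + nu i)
    (hLICQ : LinearIndependent ℝ
      (Sum.elim (fun k : Fin m => (jacobian c x) k)
        (fun i : {i : Fin n // x i = 0} => (Pi.single (i : Fin n) 1 : Fin n → ℝ))))
    (hSOSC : ∀ h : Fin n → ℝ, h ≠ 0 → jacobian c x *ᵥ h = 0 → (∀ i, x i = 0 → h i = 0) →
      0 < h ⬝ᵥ hessian (lagrangian g c lam nu) x *ᵥ h) :
    Function.Injective (fderiv ℝ (kktResidual g c) (x, lam, nu)) := by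
  refine (injective_iff_map_eq_zero _).2 fun ⟨h, u, w⟩ hzero => ?_
  rw [fderiv_kktResidual_apply hg hc] at hzero
  simp only [Prod.mk_eq_zero] at hzero
  obtain ⟨rfl, rfl, rfl⟩ :=
    kkt_linearization_eq_zero hcomp hstrict hLICQ hSOSC hzero.1 hzero.2.1 hzero.2.2
  rfl

theorem exists_contDiffAt_kktResidual_eq_zero {X : Type*} [NormedAddCommGroup X]
    [NormedSpace ℝ X] [CompleteSpace X] {g : X → (Fin n → ℝ) → ℝ}
    {c : X → (Fin n → ℝ) → Fin m → ℝ} (hg : ContDiff ℝ 2 (Function.uncurry g))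
    (hc : ContDiff ℝ 2 (Function.uncurry c)) {p₀ : X} {x : Fin n → ℝ} {lam : Fin m → ℝ}
    {nu : Fin n → ℝ} (hstat : grad (g p₀) x + (jacobian (c p₀) x)ᵀ *ᵥ lam - nu = 0)
    (hfeas : c p₀ x = 0) (hcomp : ∀ i, x i * nu i = 0) (hstrict : ∀ i, 0 < x i + nu i)
    (hLICQ : LinearIndependent ℝ
      (Sum.elim (fun k : Fin m => (jacobian (c p₀) x) k)
        (fun i : {i : Fin n // x i = 0} => (Pi.single (i : Fin n) 1 : Fin n → ℝ))))
    (hSOSC : ∀ h : Fin n → ℝ, h ≠ 0 → jacobian (c p₀) x *ᵥ h = 0 → (∀ i, x i = 0 → h i = 0) →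
      0 < h ⬝ᵥ hessian (lagrangian (g p₀) (c p₀) lam nu) x *ᵥ h) :
    ∃ ψ : X → PrimalDual n m, ψ p₀ = (x, lam, nu) ∧
      ContDiffAt ℝ 1 ψ p₀ ∧ ∀ᶠ p in nhds p₀, kktResidual (g p) (c p) (ψ p) = 0 := by
  set K := fun q : X × PrimalDual n m => kktResidual (g q.1) (c q.1) q.2
  have hK : ContDiff ℝ 1 K := contDiff_kktResidual_uncurry hg hc
  have hK₀ : K (p₀, x, lam, nu) = 0 := kktResidual_eq_zero_iff.2 ⟨hstat, hfeas, hcomp⟩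
  have hpartial : fderiv ℝ K (p₀, x, lam, nu) ∘L .inr ℝ _ _ =
      fderiv ℝ (kktResidual (g p₀) (c p₀)) (x, lam, nu) :=
    ((hK.differentiable one_ne_zero _).hasFDerivAt.comp _
      (hasFDerivAt_prodMk_right p₀ (x, lam, nu))).fderiv.symm
  have hinv : (fderiv ℝ K (p₀, x, lam, nu) ∘L .inr ℝ _ _).IsInvertible := by
    rw [hpartial]
    exact ContinuousLinearMap.isInvertible_of_injective <| injective_fderiv_kktResidual
      (hg.comp (contDiff_const.prodMk contDiff_id)) (hc.comp (contDiff_const.prodMk contDiff_id))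
      hcomp hstrict hLICQ hSOSC
  exact ⟨_, hK.contDiffAt.implicitFunction_apply_self one_ne_zero hinv,
    hK.contDiffAt.contDiffAt_implicitFunction one_ne_zero hinv,
    (hK.contDiffAt.eventually_apply_implicitFunction one_ne_zero hinv).mono
      fun _ hp => hp.trans hK₀⟩

end Calculus

theorem ContinuousAt.eventually_pos_of_pos {X ι : Type*} [TopologicalSpace X] [Finite ι]
    {φ : X → ι → ℝ} {x₀ : X} (hφ : ContinuousAt φ x₀) :
    ∀ᶠ x in nhds x₀, ∀ i, 0 < φ x₀ i → 0 < φ x i := by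
  refine Filter.eventually_all.2 fun i => ?_
  by_cases hi : 0 < φ x₀ i
  · exact ((continuous_apply i).continuousAt.comp hφ |>.eventually (lt_mem_nhds hi)).mono
      fun _ hx _ => hx
  · exact Filter.Eventually.of_forall fun _ h => absurd h hi

theorem ContDiffAt.exists_isOpen_contDiffOn {E F : Type*} [NormedAddCommGroup E]
    [NormedSpace ℝ E] [NormedAddCommGroup F] [NormedSpace ℝ F] {k : ℕ} {ψ : E → F} {x₀ : E}
    {P : E → Prop} (hψ : ContDiffAt ℝ k ψ x₀) (hP : ∀ᶠ x in nhds x₀, P x) :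
    ∃ U, IsOpen U ∧ x₀ ∈ U ∧ ContDiffOn ℝ k ψ U ∧ ∀ x ∈ U, P x := by
  obtain ⟨U, hU, hUo, hx₀U⟩ := eventually_nhds_iff.1 ((hψ.eventually (by simp)).and hP)
  exact ⟨U, hUo, hx₀U, fun x hx => (hU x hx).1.contDiffWithinAt, fun x hx => (hU x hx).2⟩

theorem nonneg_of_strictComplementarity {a b a₀ b₀ : ℝ} (h₀ : a₀ * b₀ = 0)
    (hstrict : 0 < a₀ + b₀) (hab : a * b = 0) (ha : 0 < a₀ → 0 < a) (hb : 0 < b₀ → 0 < b) :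
    0 ≤ a ∧ 0 ≤ b := by
  rcases mul_eq_zero.1 h₀ with h | h
  · have hb' := hb (by linarith)
    have : a = 0 := (mul_eq_zero.1 hab).resolve_right hb'.ne'
    exact ⟨this.ge, hb'.le⟩
  · have ha' := ha (by linarith)
    have : b = 0 := (mul_eq_zero.1 hab).resolve_left ha'.ne'
    exact ⟨ha'.le, this.ge⟩

theorem fiacco_sensitivity_general {n m l : ℕ}
    (f : (Fin n → ℝ) → (Fin l → ℝ) → ℝ)
    (c : (Fin n → ℝ) → (Fin l → ℝ) → (Fin m → ℝ))
    (hf : ContDiff ℝ 2 (fun xp : (Fin n → ℝ) × (Fin l → ℝ) => f xp.1 xp.2))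
    (hc : ContDiff ℝ 2 (fun xp : (Fin n → ℝ) × (Fin l → ℝ) => c xp.1 xp.2))
    (xstar : Fin n → ℝ) (lamstar : Fin m → ℝ) (nustar : Fin n → ℝ) (p₀ : Fin l → ℝ)
    (hstat : grad (fun z => f z p₀) xstar
        + (jacobian (fun z => c z p₀) xstar)ᵀ *ᵥ lamstar - nustar = 0)
    (hfeas : c xstar p₀ = 0)
    (hcomp : ∀ i, xstar i * nustar i = 0)
    (hstrict : ∀ i, 0 < xstar i + nustar i)
    (hLICQ : LinearIndependent ℝ
      (Sum.elim (fun k : Fin m => (jacobian (fun z => c z p₀) xstar) k)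
        (fun i : {i : Fin n // xstar i = 0} => (Pi.single (i : Fin n) 1 : Fin n → ℝ))))
    (hSOSC : ∀ h : Fin n → ℝ, h ≠ 0 →
        (jacobian (fun z => c z p₀) xstar) *ᵥ h = 0 →
        (∀ i, xstar i = 0 → h i = 0) →
        0 < h ⬝ᵥ ((hessian
          (fun z => f z p₀ + ∑ k, lamstar k * c z p₀ k - ∑ i, nustar i * z i)
          xstar) *ᵥ h)) :
    ∃ (U : Set (Fin l → ℝ)) (x : (Fin l → ℝ) → Fin n → ℝ)
      (lam : (Fin l → ℝ) → Fin m → ℝ) (nu : (Fin l → ℝ) → Fin n → ℝ),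
      IsOpen U ∧ p₀ ∈ U ∧
      ContDiffOn ℝ 1 x U ∧ ContDiffOn ℝ 1 lam U ∧ ContDiffOn ℝ 1 nu U ∧
      x p₀ = xstar ∧ lam p₀ = lamstar ∧ nu p₀ = nustar ∧
      ∀ p ∈ U,
        grad (fun z => f z p) (x p)
          + (jacobian (fun z => c z p) (x p))ᵀ *ᵥ (lam p) - nu p = 0 ∧
        c (x p) p = 0 ∧ (∀ i, 0 ≤ x p i) ∧ (∀ i, 0 ≤ nu p i) ∧
        (∀ i, x p i * nu p i = 0) := by
  obtain ⟨ψ, hψ₀, hψ, hKψ⟩ := exists_contDiffAt_kktResidual_eq_zero (g := fun p z => f z p)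
    (c := fun p z => c z p) (hf.comp (contDiff_snd.prodMk contDiff_fst))
    (hc.comp (contDiff_snd.prodMk contDiff_fst)) hstat hfeas hcomp hstrict hLICQ hSOSC
  have hxpos := hψ.continuousAt.fst.eventually_pos_of_pos
  have hνpos := hψ.continuousAt.snd.snd.eventually_pos_of_pos
  obtain ⟨U, hUo, hp₀U, hψU, hU⟩ := hψ.exists_isOpen_contDiffOn (hKψ.and <| hxpos.and hνpos)
  refine ⟨U, fun p => (ψ p).1, fun p => (ψ p).2.1, fun p => (ψ p).2.2, hUo, hp₀U,
    contDiff_fst.comp_contDiffOn hψU, (contDiff_fst.comp contDiff_snd).comp_contDiffOn hψU,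
    (contDiff_snd.comp contDiff_snd).comp_contDiffOn hψU, by simp [hψ₀], by simp [hψ₀],
    by simp [hψ₀], fun p hp => ?_⟩
  obtain ⟨hKp, hxp, hνp⟩ := hU p hp
  obtain ⟨hstatp, hfeasp, hcompp⟩ := kktResidual_eq_zero_iff.1 hKp
  have hsign i := nonneg_of_strictComplementarity (hcomp i) (hstrict i) (hcompp i)
    (by simpa [hψ₀] using hxp i) (by simpa [hψ₀] using hνp i)
  exact ⟨hstatp, hfeasp, fun i => (hsign i).1, fun i => (hsign i).2, hcompp⟩

/-- Fiacco's sensitivity theorem: under LICQ, strict complementarity and second-order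
sufficiency, the primal-dual KKT solution of the parametric NLP
`min f(x;p) s.t. c(x;p) = 0, x ≥ 0` is locally a continuously differentiable function
of the parameter `p`. -/
theorem fiacco_sensitivity {n m l : ℕ}
    (f : (Fin n → ℝ) → (Fin l → ℝ) → ℝ)
    (c : (Fin n → ℝ) → (Fin l → ℝ) → (Fin m → ℝ))
    (hf : ContDiff ℝ 2 (fun xp : (Fin n → ℝ) × (Fin l → ℝ) => f xp.1 xp.2))
    (hc : ContDiff ℝ 2 (fun xp : (Fin n → ℝ) × (Fin l → ℝ) => c xp.1 xp.2))
    (xstar : Fin n → ℝ) (lamstar : Fin m → ℝ) (nustar : Fin n → ℝ) (p₀ : Fin l → ℝ)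
    (hstat : grad (fun z => f z p₀) xstar
        + (jacobian (fun z => c z p₀) xstar)ᵀ *ᵥ lamstar - nustar = 0)
    (hfeas : c xstar p₀ = 0)
    (hx : ∀ i, 0 ≤ xstar i) (hnu : ∀ i, 0 ≤ nustar i)
    (hcomp : ∀ i, xstar i * nustar i = 0)
    (hstrict : ∀ i, 0 < xstar i + nustar i)
    (hLICQ : LinearIndependent ℝ
      (Sum.elim (fun k : Fin m => (jacobian (fun z => c z p₀) xstar) k)
        (fun i : {i : Fin n // xstar i = 0} => (Pi.single (i : Fin n) 1 : Fin n → ℝ))))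
    (hSOSC : ∀ h : Fin n → ℝ, h ≠ 0 →
        (jacobian (fun z => c z p₀) xstar) *ᵥ h = 0 →
        (∀ i, xstar i = 0 → h i = 0) →
        0 < h ⬝ᵥ ((hessian
          (fun z => f z p₀ + ∑ k, lamstar k * c z p₀ k - ∑ i, nustar i * z i)
          xstar) *ᵥ h)) :
    ∃ (U : Set (Fin l → ℝ)) (x : (Fin l → ℝ) → Fin n → ℝ)
      (lam : (Fin l → ℝ) → Fin m → ℝ) (nu : (Fin l → ℝ) → Fin n → ℝ),
      IsOpen U ∧ p₀ ∈ U ∧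
      ContDiffOn ℝ 1 x U ∧ ContDiffOn ℝ 1 lam U ∧ ContDiffOn ℝ 1 nu U ∧
      x p₀ = xstar ∧ lam p₀ = lamstar ∧ nu p₀ = nustar ∧
      ∀ p ∈ U,
        grad (fun z => f z p) (x p)
          + (jacobian (fun z => c z p) (x p))ᵀ *ᵥ (lam p) - nu p = 0 ∧
        c (x p) p = 0 ∧ (∀ i, 0 ≤ x p i) ∧ (∀ i, 0 ≤ nu p i) ∧
        (∀ i, x p i * nu p i = 0) :=
  fiacco_sensitivity_general f c hf hc xstar lamstar nustar p₀ hstat hfeas hcomp hstrict hLICQ hSOSC
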